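/- Let S_{U,4} be the linear span of S_U and ψ₄ in ℂ³ ⊗ ℂ³. Then the set of one-dimensional subspaces of S_{U,4} spanned by product vectors has exactly 6 elements, namely those spanned by: ψ₄ = (|0⟩ + |1⟩ + |2⟩) ⊗ (|0⟩ + |1⟩ + |2⟩); |1⟩ ⊗ |1⟩; |0⟩ ⊗ (|0⟩ + |1⟩); (|0⟩ + |1⟩) ⊗ |2⟩; |2⟩ ⊗ (|1⟩ + |2⟩); and (|1⟩ + |2⟩) ⊗ |0⟩. In particular, every product vector in S_{U,4} is a scalar multiple of one of these six vectors. -/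

import Mathlib

/-!
The vector ψ₄ is orthogonal to ψ₀, …, ψ₃, so adding it back to `U33ᗮ` gives
`S_{U,4} = {ψ₀, ψ₁, ψ₂, ψ₃}ᗮ`, the space cut out by the four equations
`ξ₀₀ = ξ₀₁`, `ξ₂₁ = ξ₂₂`, `ξ₀₂ = ξ₁₂`, `ξ₂₀ = ξ₁₀`. For a product vector `u ⊗ v` each equation
factors, e.g. `u₀ (v₀ - v₁) = 0`, and the case split on which factor vanishes leaves exactly six
lines; they are told apart by the coordinates on which their spanning vectors vanish.
-/

noncomputable section

abbrev H3 : Type := EuclideanSpace ℂ (Fin 3)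
abbrev H33 : Type := EuclideanSpace ℂ (Fin 3 × Fin 3)

/-- standard basis vector of ℂ³ -/
def ket3 (i : Fin 3) : H3 := EuclideanSpace.single i 1

/-- elementary tensor of two vectors of ℂ³, viewed in ℂ³ ⊗ ℂ³ ≅ ℂ⁹ -/
def tp (u v : H3) : H33 := WithLp.toLp 2 (fun p : Fin 3 × Fin 3 => u p.1 * v p.2)

/-- a product vector in ℂ³ ⊗ ℂ³ -/
def IsProdVec (ξ : H33) : Prop := ∃ u v : H3, ξ = tp u v

/-- the set of one-dimensional subspaces of `T` spanned by (nonzero) product vectors -/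
def prodLines (T : Submodule ℂ H33) : Set (Submodule ℂ H33) :=
  {L | ∃ ξ : H33, ξ ≠ 0 ∧ ξ ∈ T ∧ IsProdVec ξ ∧ L = Submodule.span ℂ {ξ}}

def ψ₀ : H33 := (Real.sqrt 2 : ℂ)⁻¹ • tp (ket3 0) (ket3 0 - ket3 1)
def ψ₁ : H33 := (Real.sqrt 2 : ℂ)⁻¹ • tp (ket3 2) (ket3 1 - ket3 2)
def ψ₂ : H33 := (Real.sqrt 2 : ℂ)⁻¹ • tp (ket3 0 - ket3 1) (ket3 2)
def ψ₃ : H33 := (Real.sqrt 2 : ℂ)⁻¹ • tp (ket3 2 - ket3 1) (ket3 0)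
def ψ₄ : H33 := (3 : ℂ)⁻¹ • tp (ket3 0 + ket3 1 + ket3 2) (ket3 0 + ket3 1 + ket3 2)

/-- the span of the TILES unextendible product basis -/
def U33 : Submodule ℂ H33 := Submodule.span ℂ {ψ₀, ψ₁, ψ₂, ψ₃, ψ₄}

/-- the orthogonal complement of the span of the TILES UPB -/
def SU : Submodule ℂ H33 := U33ᗮ

/-- the perturbation of `S_U` by `ψ₄` -/
def SU4 : Submodule ℂ H33 := SU ⊔ Submodule.span ℂ {ψ₄}

open Submodule

local notation "⟪" x ", " y "⟫" => @inner ℂ _ _ x y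

theorem Submodule.orthogonal_sup_span_singleton_sup {𝕜 E : Type*} [RCLike 𝕜]
    [NormedAddCommGroup E] [InnerProductSpace 𝕜 E] {K : Submodule 𝕜 E} {v : E} (hv : v ∈ Kᗮ) :
    (K ⊔ 𝕜 ∙ v)ᗮ ⊔ 𝕜 ∙ v = Kᗮ := by
  rw [← inf_orthogonal, inf_comm, sup_comm]
  exact sup_orthogonal_inf_of_hasOrthogonalProjection ((span_singleton_le_iff_mem _ _).mpr hv)

lemma ket3_apply (i j : Fin 3) : ket3 i j = if i = j then 1 else 0 := by
  simp [ket3, PiLp.single_apply, eq_comm]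

@[simp] lemma tp_apply (u v : H3) (p : Fin 3 × Fin 3) : tp u v p = u p.1 * v p.2 := rfl

lemma tp_smul_smul (a b : ℂ) (u v : H3) : tp (a • u) (b • v) = (a * b) • tp u v := by
  ext p; simp; ring

lemma tp_sub_left (u u' v : H3) : tp (u - u') v = tp u v - tp u' v := by
  ext p; simp; ring

lemma tp_sub_right (u v v' : H3) : tp u (v - v') = tp u v - tp u v' := by
  ext p; simp; ring

lemma inner_tp_ket3 (i j : Fin 3) (ξ : H33) : ⟪tp (ket3 i) (ket3 j), ξ⟫ = ξ (i, j) := by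
  simp [PiLp.inner_apply, ket3_apply, Fintype.sum_prod_type, apply_ite]

lemma inner_psi0 (ξ : H33) : ⟪ψ₀, ξ⟫ = (ξ (0, 0) - ξ (0, 1)) / Real.sqrt 2 := by
  simp [ψ₀, div_eq_mul_inv, tp_sub_right, inner_tp_ket3]

lemma inner_psi1 (ξ : H33) : ⟪ψ₁, ξ⟫ = (ξ (2, 1) - ξ (2, 2)) / Real.sqrt 2 := by
  simp [ψ₁, div_eq_mul_inv, tp_sub_right, inner_tp_ket3]

lemma inner_psi2 (ξ : H33) : ⟪ψ₂, ξ⟫ = (ξ (0, 2) - ξ (1, 2)) / Real.sqrt 2 := by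
  simp [ψ₂, div_eq_mul_inv, tp_sub_left, inner_tp_ket3]

lemma inner_psi3 (ξ : H33) : ⟪ψ₃, ξ⟫ = (ξ (2, 0) - ξ (1, 0)) / Real.sqrt 2 := by
  simp [ψ₃, div_eq_mul_inv, tp_sub_left, inner_tp_ket3]

lemma mem_orthogonal_span_psi_iff (ξ : H33) :
    ξ ∈ (span ℂ {ψ₀, ψ₁, ψ₂, ψ₃})ᗮ ↔
      ξ (0, 0) = ξ (0, 1) ∧ ξ (2, 1) = ξ (2, 2) ∧ ξ (0, 2) = ξ (1, 2) ∧ ξ (2, 0) = ξ (1, 0) := by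
  simp only [span_insert, ← inf_orthogonal, mem_inf, mem_orthogonal_singleton_iff_inner_right,
    inner_psi0, inner_psi1, inner_psi2, inner_psi3, div_eq_zero_iff, sub_eq_zero]
  simp

lemma ket3_sum_apply (i : Fin 3) : (ket3 0 + ket3 1 + ket3 2) i = 1 := by
  fin_cases i <;> simp [ket3_apply]

lemma psi4_apply (p : Fin 3 × Fin 3) : ψ₄ p = 3⁻¹ := by
  simp only [ψ₄, PiLp.smul_apply, tp_apply, ket3_sum_apply, smul_eq_mul, mul_one]

lemma U33_eq_sup : U33 = span ℂ {ψ₀, ψ₁, ψ₂, ψ₃} ⊔ ℂ ∙ ψ₄ := by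
  simp only [U33, span_insert, sup_assoc]

lemma SU4_eq_orthogonal : SU4 = (span ℂ {ψ₀, ψ₁, ψ₂, ψ₃})ᗮ := by
  rw [SU4, SU, U33_eq_sup]
  exact orthogonal_sup_span_singleton_sup
    ((mem_orthogonal_span_psi_iff ψ₄).mpr (by simp [psi4_apply]))

def su4ProductLines : Set (Submodule ℂ H33) :=
  {ℂ ∙ tp (ket3 0 + ket3 1 + ket3 2) (ket3 0 + ket3 1 + ket3 2),
   ℂ ∙ tp (ket3 1) (ket3 1),
   ℂ ∙ tp (ket3 0) (ket3 0 + ket3 1),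
   ℂ ∙ tp (ket3 0 + ket3 1) (ket3 2),
   ℂ ∙ tp (ket3 2) (ket3 1 + ket3 2),
   ℂ ∙ tp (ket3 1 + ket3 2) (ket3 0)}

lemma span_tp_eq_of_eq_smul {u v x y : H3} {a b : ℂ} (ha : a ≠ 0) (hb : b ≠ 0)
    (hu : u = a • x) (hv : v = b • y) : ℂ ∙ tp u v = ℂ ∙ tp x y := by
  rw [hu, hv, tp_smul_smul]
  exact span_singleton_smul_eq (mul_ne_zero ha hb).isUnit _

lemma H3_eq_zero_iff {u : H3} : u = 0 ↔ u 0 = 0 ∧ u 1 = 0 ∧ u 2 = 0 := by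
  refine ⟨fun h => by simp [h], fun ⟨h0, h1, h2⟩ => ?_⟩
  ext i; fin_cases i <;> assumption

lemma tp_eq_zero_iff {u v : H3} : tp u v = 0 ↔ u = 0 ∨ v = 0 := by
  refine ⟨fun h => ?_, ?_⟩
  · by_contra! ⟨hu, hv⟩
    obtain ⟨i, hi⟩ : ∃ i, u i ≠ 0 := by by_contra! h'; exact hu (by ext i; exact h' i)
    obtain ⟨j, hj⟩ : ∃ j, v j ≠ 0 := by by_contra! h'; exact hv (by ext j; exact h' j)
    exact mul_ne_zero hi hj congr($h (i, j))
  · rintro (rfl | rfl) <;> ext <;> simp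

lemma span_tp_mem_su4ProductLines_of_apply_zero_eq_zero {u v : H3} (hu : u ≠ 0) (hv : v ≠ 0)
    (hu0 : u 0 = 0) (h₁ : u 2 * v 1 = u 2 * v 2) (h₂ : u 0 * v 2 = u 1 * v 2)
    (h₃ : u 2 * v 0 = u 1 * v 0) : ℂ ∙ tp u v ∈ su4ProductLines := by
  have hu1v2 : u 1 * v 2 = 0 := by rw [← h₂, hu0, zero_mul]
  rcases eq_or_ne (u 2) 0 with hu2 | hu2
  · have hu1 : u 1 ≠ 0 := fun h => hu (H3_eq_zero_iff.mpr ⟨hu0, h, hu2⟩)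
    have hv2 : v 2 = 0 := (mul_eq_zero.mp hu1v2).resolve_left hu1
    have hv0 : v 0 = 0 := by simpa [hu2, hu1] using h₃
    have hv1 : v 1 ≠ 0 := fun h => hv (H3_eq_zero_iff.mpr ⟨hv0, h, hv2⟩)
    rw [span_tp_eq_of_eq_smul (x := ket3 1) (y := ket3 1) hu1 hv1
      (by ext i; fin_cases i <;> simp [ket3_apply, *])
      (by ext i; fin_cases i <;> simp [ket3_apply, *])]
    simp [su4ProductLines]
  · have hv12 : v 1 = v 2 := mul_left_cancel₀ hu2 h₁
    rcases eq_or_ne (v 0) 0 with hv0 | hv0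
    · have hv1 : v 1 ≠ 0 := fun h => hv (H3_eq_zero_iff.mpr ⟨hv0, h, hv12 ▸ h⟩)
      have hu1 : u 1 = 0 := (mul_eq_zero.mp hu1v2).resolve_right (hv12 ▸ hv1)
      rw [span_tp_eq_of_eq_smul (x := ket3 2) (y := ket3 1 + ket3 2) hu2 hv1
        (by ext i; fin_cases i <;> simp [ket3_apply, *])
        (by ext i; fin_cases i <;> simp [ket3_apply, *])]
      simp [su4ProductLines]
    · have hu12 : u 1 = u 2 := (mul_right_cancel₀ hv0 h₃).symm
      have hv2 : v 2 = 0 := (mul_eq_zero.mp hu1v2).resolve_left (hu12 ▸ hu2)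
      rw [span_tp_eq_of_eq_smul (x := ket3 1 + ket3 2) (y := ket3 0) hu2 hv0
        (by ext i; fin_cases i <;> simp [ket3_apply, *])
        (by ext i; fin_cases i <;> simp [ket3_apply, *])]
      simp [su4ProductLines]

lemma span_tp_mem_su4ProductLines_of_apply_zero_ne_zero {u v : H3} (hv : v ≠ 0)
    (hu0 : u 0 ≠ 0) (h₀ : u 0 * v 0 = u 0 * v 1) (h₁ : u 2 * v 1 = u 2 * v 2)
    (h₂ : u 0 * v 2 = u 1 * v 2) (h₃ : u 2 * v 0 = u 1 * v 0) :
    ℂ ∙ tp u v ∈ su4ProductLines := by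
  have hv01 : v 0 = v 1 := mul_left_cancel₀ hu0 h₀
  rcases eq_or_ne (v 2) 0 with hv2 | hv2
  · have hv0 : v 0 ≠ 0 := fun h => hv (H3_eq_zero_iff.mpr ⟨h, hv01 ▸ h, hv2⟩)
    have hu12 : u 1 = u 2 := (mul_right_cancel₀ hv0 h₃).symm
    have hu2 : u 2 = 0 := by simpa [hv2, ← hv01, hv0] using h₁
    rw [span_tp_eq_of_eq_smul (x := ket3 0) (y := ket3 0 + ket3 1) hu0 hv0
      (by ext i; fin_cases i <;> simp [ket3_apply, *])
      (by ext i; fin_cases i <;> simp [ket3_apply, *])]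
    simp [su4ProductLines]
  · have hu01 : u 0 = u 1 := mul_right_cancel₀ hv2 h₂
    rcases eq_or_ne (v 0) 0 with hv0 | hv0
    · have hv1 : v 1 = 0 := hv01 ▸ hv0
      have hu2 : u 2 = 0 := by simpa [hv1, hv2] using h₁
      rw [span_tp_eq_of_eq_smul (x := ket3 0 + ket3 1) (y := ket3 2) hu0 hv2
        (by ext i; fin_cases i <;> simp [ket3_apply, *])
        (by ext i; fin_cases i <;> simp [ket3_apply, *])]
      simp [su4ProductLines]
    · have hu12 : u 1 = u 2 := (mul_right_cancel₀ hv0 h₃).symm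
      have hv12 : v 1 = v 2 := mul_left_cancel₀ (hu12 ▸ hu01 ▸ hu0) h₁
      rw [span_tp_eq_of_eq_smul (x := ket3 0 + ket3 1 + ket3 2) (y := ket3 0 + ket3 1 + ket3 2)
        hu0 hv0
        (by ext i; fin_cases i <;> simp [ket3_apply, *])
        (by ext i; fin_cases i <;> simp [ket3_apply, *])]
      simp [su4ProductLines]

lemma span_tp_mem_su4ProductLines {u v : H3} (hu : u ≠ 0) (hv : v ≠ 0)
    (h₀ : u 0 * v 0 = u 0 * v 1) (h₁ : u 2 * v 1 = u 2 * v 2)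
    (h₂ : u 0 * v 2 = u 1 * v 2) (h₃ : u 2 * v 0 = u 1 * v 0) :
    ℂ ∙ tp u v ∈ su4ProductLines := by
  rcases eq_or_ne (u 0) 0 with hu0 | hu0
  · exact span_tp_mem_su4ProductLines_of_apply_zero_eq_zero hu hv hu0 h₁ h₂ h₃
  · exact span_tp_mem_su4ProductLines_of_apply_zero_ne_zero hv hu0 h₀ h₁ h₂ h₃

theorem EuclideanSpace.span_singleton_ne_of_exists_apply {𝕜 ι : Type*} [RCLike 𝕜]
    {a b : EuclideanSpace 𝕜 ι} (h : ∃ i, a i ≠ 0 ∧ b i = 0) : 𝕜 ∙ a ≠ 𝕜 ∙ b := by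
  obtain ⟨i, ha, hb⟩ := h
  intro h
  obtain ⟨c, hc⟩ := mem_span_singleton.mp (h ▸ mem_span_singleton_self a)
  exact ha (by rw [← hc, PiLp.smul_apply, hb, smul_zero])

lemma su4ProductLines_ncard : su4ProductLines.ncard = 6 := by
  rw [su4ProductLines, Set.ncard_insert_of_notMem, Set.ncard_insert_of_notMem,
    Set.ncard_insert_of_notMem, Set.ncard_insert_of_notMem, Set.ncard_insert_of_notMem,
    Set.ncard_singleton]
  all_goals
    simp only [Set.mem_insert_iff, Set.mem_singleton_iff, not_or]
    repeat' constructor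
  all_goals
    exact EuclideanSpace.span_singleton_ne_of_exists_apply
      (by simp [Prod.exists, Fin.exists_fin_succ, ket3_apply])

lemma span_tp_mem_prodLines {T : Submodule ℂ H33} {u v : H3} (hu : u ≠ 0) (hv : v ≠ 0)
    (hT : tp u v ∈ T) : ℂ ∙ tp u v ∈ prodLines T :=
  ⟨tp u v, by simp [tp_eq_zero_iff, hu, hv], hT, ⟨u, v, rfl⟩, rfl⟩

lemma prodLines_SU4 : prodLines SU4 = su4ProductLines := by
  ext L
  constructor
  · rintro ⟨_, hne, hmem, ⟨u, v, rfl⟩, rfl⟩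
    rw [SU4_eq_orthogonal, mem_orthogonal_span_psi_iff] at hmem
    rw [Ne, tp_eq_zero_iff, not_or] at hne
    exact span_tp_mem_su4ProductLines hne.1 hne.2 hmem.1 hmem.2.1 hmem.2.2.1 hmem.2.2.2
  · rintro (rfl | rfl | rfl | rfl | rfl | rfl) <;>
      exact span_tp_mem_prodLines (by simp [H3_eq_zero_iff, ket3_apply])
        (by simp [H3_eq_zero_iff, ket3_apply])
        (by simp [SU4_eq_orthogonal, mem_orthogonal_span_psi_iff, ket3_apply])

theorem statement3 :
    prodLines SU4 =
      {Submodule.span ℂ {tp (ket3 0 + ket3 1 + ket3 2) (ket3 0 + ket3 1 + ket3 2)},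
       Submodule.span ℂ {tp (ket3 1) (ket3 1)},
       Submodule.span ℂ {tp (ket3 0) (ket3 0 + ket3 1)},
       Submodule.span ℂ {tp (ket3 0 + ket3 1) (ket3 2)},
       Submodule.span ℂ {tp (ket3 2) (ket3 1 + ket3 2)},
       Submodule.span ℂ {tp (ket3 1 + ket3 2) (ket3 0)}} ∧
    (prodLines SU4).ncard = 6 :=
  ⟨prodLines_SU4, prodLines_SU4 ▸ su4ProductLines_ncard⟩
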